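/- arXiv:1903.03945 — 2 statements merged into one kernel-verified Lean document; each statement's English description precedes it below -/
import Mathlib

section
/- Let k₁, k₂ > 0 and Ã = !![0, 1; −k₁, −k₂]. If x : ℝ → (Fin 2 → ℝ) satisfies x'(t) = Ã.mulVec (x t) for all t ≥ 0 (in the sense of HasDerivAt), then x(t) → 0 as t → ∞. -/
/-
The quadratic form `V = k₁ θ₁² + θ₂² / 2 + (k₂ θ₁ + θ₂)² / 2` is a strict Lyapunov function for
`Ã`: along solutions `V' = -k₁ k₂ θ₁² - k₂ θ₂² ≤ -c V` for some `c > 0`, so by Grönwall's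
inequality `V` decays exponentially, and `V` bounds the squares of both coordinates.
-/

open Matrix Filter Real Topology

theorem le_mul_exp_of_hasDerivAt_le_mul {f f' : ℝ → ℝ} {K a : ℝ}
    (hf : ∀ t, a ≤ t → HasDerivAt f (f' t) t) (hf' : ∀ t, a ≤ t → f' t ≤ K * f t)
    {t : ℝ} (ht : a ≤ t) : f t ≤ f a * exp (K * (t - a)) := by
  have bound := le_gronwallBound_of_liminf_deriv_right_le (f := f) (f' := f') (δ := f a)
    (K := K) (ε := 0) (b := t)
    (fun s hs => (hf s hs.1).continuousAt.continuousWithinAt)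
    (fun s hs _ hr => (hf s hs.1).hasDerivWithinAt.liminf_right_slope_le hr) le_rfl
    (fun s hs => by simpa using hf' s hs.1) t ⟨ht, le_rfl⟩
  rwa [gronwallBound_ε0] at bound

theorem tendsto_zero_of_hasDerivAt_le_neg_mul {f f' : ℝ → ℝ} {c a : ℝ} (hc : 0 < c)
    (hf : ∀ t, a ≤ t → HasDerivAt f (f' t) t) (hf' : ∀ t, a ≤ t → f' t ≤ -c * f t)
    (hf_nonneg : ∀ t, a ≤ t → 0 ≤ f t) : Tendsto f atTop (𝓝 0) := by
  have hexp : Tendsto (fun t => f a * exp (-c * (t - a))) atTop (𝓝 0) := by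
    simpa [sub_eq_add_neg] using (tendsto_exp_atBot.comp
      ((tendsto_id.atTop_add (tendsto_const_nhds (x := -a))).const_mul_atTop_of_neg
        (neg_neg_of_pos hc))).const_mul (f a)
  exact tendsto_of_tendsto_of_tendsto_of_le_of_le' tendsto_const_nhds hexp
    (eventually_ge_atTop a |>.mono hf_nonneg)
    (eventually_ge_atTop a |>.mono fun t ht => le_mul_exp_of_hasDerivAt_le_mul hf hf' ht)

theorem tendsto_zero_of_sq_le {α : Type*} {l : Filter α} {u g : α → ℝ}
    (hg : Tendsto g l (𝓝 0)) (hle : ∀ᶠ t in l, u t ^ 2 ≤ g t) : Tendsto u l (𝓝 0) := by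
  have hsqrt : Tendsto (fun t => √(g t)) l (𝓝 0) := by simpa using hg.sqrt
  exact squeeze_zero_norm' (hle.mono fun t ht => abs_le_sqrt ht) hsqrt

namespace CompanionLyapunov

variable (k₁ k₂ : ℝ)

/-- `vᵀ P v` for the solution `P = !![k₂²/2 + k₁, k₂/2; k₂/2, 1]` of the Lyapunov equation
`ÃᵀP + PÃ = -diag(k₁ k₂, k₂)`. -/
noncomputable def lyapunov (v : Fin 2 → ℝ) : ℝ :=
  k₁ * v 0 ^ 2 + v 1 ^ 2 / 2 + (k₂ * v 0 + v 1) ^ 2 / 2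

variable {k₁ k₂}

theorem lyapunov_nonneg (hk₁ : 0 ≤ k₁) (v : Fin 2 → ℝ) : 0 ≤ lyapunov k₁ k₂ v := by
  unfold lyapunov
  positivity

theorem min_mul_sq_le_lyapunov (hk₁ : 0 ≤ k₁) (v : Fin 2 → ℝ) (i : Fin 2) :
    min k₁ (1 / 2) * v i ^ 2 ≤ lyapunov k₁ k₂ v := by
  have h₀ : min k₁ (1 / 2) * v 0 ^ 2 ≤ k₁ * v 0 ^ 2 :=
    mul_le_mul_of_nonneg_right (min_le_left _ _) (sq_nonneg _)
  have h₁ : min k₁ (1 / 2) * v 1 ^ 2 ≤ 1 / 2 * v 1 ^ 2 :=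
    mul_le_mul_of_nonneg_right (min_le_right _ _) (sq_nonneg _)
  unfold lyapunov
  fin_cases i <;> simp only [Fin.zero_eta, Fin.mk_one] <;> nlinarith [sq_nonneg (k₂ * v 0 + v 1)]

theorem hasDerivAt_lyapunov_comp {x : ℝ → Fin 2 → ℝ} {t : ℝ}
    (hx : HasDerivAt x (!![0, 1; -k₁, -k₂] *ᵥ x t) t) :
    HasDerivAt (fun s => lyapunov k₁ k₂ (x s)) (-(k₁ * k₂) * x t 0 ^ 2 - k₂ * x t 1 ^ 2) t := by
  have h₀ : HasDerivAt (fun s => x s 0) (x t 1) t := by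
    simpa [mulVec, dotProduct] using hasDerivAt_pi.1 hx 0
  have h₁ : HasDerivAt (fun s => x s 1) (-k₁ * x t 0 - k₂ * x t 1) t := by
    simpa [mulVec, dotProduct, sub_eq_add_neg] using hasDerivAt_pi.1 hx 1
  refine ((((h₀.pow 2).const_mul k₁).add ((h₁.pow 2).div_const 2)).add
    ((((h₀.const_mul k₂).add h₁).pow 2).div_const 2)).congr_deriv ?_
  simp only [Pi.add_apply]
  ring

theorem exists_pos_lyapunov_decay (hk₁ : 0 < k₁) (hk₂ : 0 < k₂) :
    ∃ c > 0, ∀ v : Fin 2 → ℝ,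
      -(k₁ * k₂) * v 0 ^ 2 - k₂ * v 1 ^ 2 ≤ -c * lyapunov k₁ k₂ v := by
  set c := min (k₁ * k₂ / (k₁ + k₂ ^ 2)) (2 * k₂ / 3)
  have hc : 0 < c := lt_min (by positivity) (by positivity)
  have hc₀ : c * (k₁ + k₂ ^ 2) ≤ k₁ * k₂ := (le_div_iff₀ (by positivity)).1 (min_le_left _ _)
  have hc₁ : c * (3 / 2) ≤ k₂ := by linarith [min_le_right (k₁ * k₂ / (k₁ + k₂ ^ 2)) (2 * k₂ / 3)]
  refine ⟨c, hc, fun v => ?_⟩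
  have hV : lyapunov k₁ k₂ v ≤ (k₁ + k₂ ^ 2) * v 0 ^ 2 + 3 / 2 * v 1 ^ 2 := by
    unfold lyapunov
    nlinarith [sq_nonneg (k₂ * v 0 - v 1)]
  have hcV : c * lyapunov k₁ k₂ v ≤ k₁ * k₂ * v 0 ^ 2 + k₂ * v 1 ^ 2 :=
    calc c * lyapunov k₁ k₂ v ≤ c * ((k₁ + k₂ ^ 2) * v 0 ^ 2 + 3 / 2 * v 1 ^ 2) := by gcongr
      _ = c * (k₁ + k₂ ^ 2) * v 0 ^ 2 + c * (3 / 2) * v 1 ^ 2 := by ring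
      _ ≤ k₁ * k₂ * v 0 ^ 2 + k₂ * v 1 ^ 2 := by gcongr
  linarith

end CompanionLyapunov

open CompanionLyapunov

/-- Since `Ã = !![0, 1; −k₁, −k₂]` is Hurwitz for `k₁, k₂ > 0`, every solution
of `x' = Ã x` converges to the origin. -/
theorem pitch_error_converges (k₁ k₂ : ℝ) (hk₁ : 0 < k₁) (hk₂ : 0 < k₂)
    (x : ℝ → Fin 2 → ℝ)
    (hx : ∀ t : ℝ, 0 ≤ t →
      HasDerivAt x ((!![0, 1; -k₁, -k₂] : Matrix (Fin 2) (Fin 2) ℝ).mulVec (x t)) t) :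
    Tendsto x atTop (nhds 0) := by
  obtain ⟨c, hc, hdecay⟩ := exists_pos_lyapunov_decay hk₁ hk₂
  have hV : Tendsto (fun t => lyapunov k₁ k₂ (x t)) atTop (𝓝 0) :=
    tendsto_zero_of_hasDerivAt_le_neg_mul hc (fun t ht => hasDerivAt_lyapunov_comp (hx t ht))
      (fun t _ => hdecay (x t)) (fun t _ => lyapunov_nonneg hk₁.le (x t))
  have hm : 0 < min k₁ (1 / 2) := lt_min hk₁ one_half_pos
  exact tendsto_pi_nhds.2 fun i => tendsto_zero_of_sq_le (by simpa using hV.div_const _)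
    (.of_forall fun t => (le_div_iff₀' hm).2 (min_mul_sq_le_lyapunov hk₁.le (x t) i))
end

section
/- Let k_v, k_γ, k_s, k_ω > 0, let Q be a symmetric positive-semidefinite real 2×2 matrix, let l ≥ 0 and v_d ≥ √(2l), and let ṽ, γ̃, e_s, e_d, ψ̃, d ∈ ℝ and θ̃ ∈ (Fin 2 → ℝ) satisfy |ṽ| ≤ √(2l) and e_d·sin(d) ≤ 0. Then −k_v·ṽ² − k_γ·γ̃² − θ̃ ⬝ᵥ (Q.mulVec θ̃) − k_s·|e_s| + ṽ·e_d·sin(d) + v_d·e_d·sin(d) − k_ω·|ψ̃ − d| ≤ 0. -/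
/-!
The only term of indefinite sign is the coupling `(ṽ + v_d) e_d sin δ`. On the sublevel set
`|ṽ| ≤ √(2l) ≤ v_d`, so `ṽ + v_d ≥ 0`, and the steering law makes `e_d sin δ ≤ 0`; every other
term is a nonpositive damping term.
-/

open Real Matrix

theorem add_mul_nonpos_of_abs_le {α : Type*} [Ring α] [LinearOrder α] [IsOrderedRing α]
    {v c x : α} (hv : |v| ≤ c) (hx : x ≤ 0) : v * x + c * x ≤ 0 := by
  rw [← add_mul]
  exact mul_nonpos_of_nonneg_of_nonpos (neg_le_iff_add_nonneg.mp (neg_le_of_abs_le hv)) hx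

theorem total_lyapunov_derivative_nonpos_general
    (kv kγ ks kω : ℝ) (hkv : 0 < kv) (hkγ : 0 < kγ) (hks : 0 < ks)
    (hkω : 0 < kω)
    (Q : Matrix (Fin 2) (Fin 2) ℝ) (hQ : Q.PosSemidef)
    (l vd : ℝ) (hvd : Real.sqrt (2 * l) ≤ vd)
    (vt γt es ed ψ d : ℝ) (θ : Fin 2 → ℝ)
    (hvt : |vt| ≤ Real.sqrt (2 * l)) (hed : ed * Real.sin d ≤ 0) :
    -kv * vt ^ 2 - kγ * γt ^ 2 - θ ⬝ᵥ Q.mulVec θ - ks * |es|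
        + vt * ed * Real.sin d + vd * ed * Real.sin d - kω * |ψ - d| ≤ 0 := by
  have hcoupling : vt * ed * sin d + vd * ed * sin d ≤ 0 := by
    simpa only [mul_assoc] using add_mul_nonpos_of_abs_le (hvt.trans hvd) hed
  have hθ : 0 ≤ θ ⬝ᵥ Q *ᵥ θ := by simpa using hQ.dotProduct_mulVec_nonneg θ
  have hv : 0 ≤ kv * vt ^ 2 := by positivity
  have hγ : 0 ≤ kγ * γt ^ 2 := by positivity
  have hs : 0 ≤ ks * |es| := by positivity
  have hω : 0 ≤ kω * |ψ - d| := by positivity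
  linarith

/-- On the invariant sublevel set (`|ṽ| ≤ √(2l)`) and with `v_d ≥ √(2l)`, the
total Lyapunov derivative is nonpositive. -/
theorem total_lyapunov_derivative_nonpos
    (kv kγ ks kω : ℝ) (hkv : 0 < kv) (hkγ : 0 < kγ) (hks : 0 < ks)
    (hkω : 0 < kω)
    (Q : Matrix (Fin 2) (Fin 2) ℝ) (hQs : Q.IsSymm) (hQ : Q.PosSemidef)
    (l vd : ℝ) (hl : 0 ≤ l) (hvd : Real.sqrt (2 * l) ≤ vd)
    (vt γt es ed ψ d : ℝ) (θ : Fin 2 → ℝ)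
    (hvt : |vt| ≤ Real.sqrt (2 * l)) (hed : ed * Real.sin d ≤ 0) :
    -kv * vt ^ 2 - kγ * γt ^ 2 - θ ⬝ᵥ Q.mulVec θ - ks * |es|
        + vt * ed * Real.sin d + vd * ed * Real.sin d - kω * |ψ - d| ≤ 0 :=
  total_lyapunov_derivative_nonpos_general kv kγ ks kω hkv hkγ hks hkω Q hQ l vd hvd vt γt es ed ψ d
    θ hvt hed
end
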